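/- Assume 𝔭 = 2^ℵ₀. Then there is a maximal ideal independent family 𝓘 of infinite subsets of ℕ with the property that for every A ∈ 𝓘 the complemented filter 𝓕(𝓘, A) is a p_𝔠-point (in particular, an ultrafilter). -/

import Mathlib

open Cardinal Set Filter

/-- A family of subsets of ℕ is ideal independent if for every `A` in the family and
every finite subfamily `F` not containing `A`, the set `A \ ⋃ F` is infinite. -/
def IdealIndependent (I : Set (Set ℕ)) : Prop :=
  ∀ A ∈ I, ∀ F : Finset (Set ℕ), ↑F ⊆ I \ {A} → (A \ ⋃₀ ↑F).Infinite

/-- A maximal ideal independent family. -/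
def MaxIdealIndependent (I : Set (Set ℕ)) : Prop :=
  IdealIndependent I ∧ ∀ J : Set (Set ℕ), IdealIndependent J → I ⊆ J → J = I

/-- The complemented filter 𝓕(𝓘, A) of an ideal independent family `I` corresponding
to `A ∈ I`: the filter generated by the sets `A \ ⋃ F` for finite `F ⊆ I \ {A}`. -/
def complFilter (I : Set (Set ℕ)) (A : Set ℕ) : Filter ℕ :=
  Filter.generate { S | ∃ F : Finset (Set ℕ), ↑F ⊆ I \ {A} ∧ S = A \ ⋃₀ ↑F }

/-- A family has the finite intersection property if every finite subfamily has
infinite intersection. -/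
def HasFIP (Z : Set (Set ℕ)) : Prop :=
  ∀ F : Finset (Set ℕ), ↑F ⊆ Z → (⋂₀ (↑F : Set (Set ℕ))).Infinite

/-- `Y` is a pseudo-intersection of the family `Z`: an infinite set almost contained
in every member of `Z`. -/
def IsPseudoIntersection (Y : Set ℕ) (Z : Set (Set ℕ)) : Prop :=
  Y.Infinite ∧ ∀ X ∈ Z, (Y \ X).Finite

/-- The pseudo-intersection number 𝔭: the least cardinality of a family of infinite
subsets of ℕ with the finite intersection property but no pseudo-intersection. -/
noncomputable def pNumber : Cardinal :=
  sInf { c : Cardinal | ∃ Z : Set (Set ℕ), (∀ A ∈ Z, A.Infinite) ∧ HasFIP Z ∧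
    (¬ ∃ Y : Set ℕ, IsPseudoIntersection Y Z) ∧ c = #Z }

/-- A filter on ℕ is a `p_𝔠`-point if it is a nonprincipal ultrafilter and every
subfamily of cardinality `< 2^ℵ₀` has a pseudo-intersection belonging to it. -/
def IsPcPoint (F : Filter ℕ) : Prop :=
  F ≠ ⊥ ∧ F ≤ Filter.cofinite ∧ (∀ D : Set ℕ, D ∈ F ∨ Dᶜ ∈ F) ∧
  ∀ Z : Set (Set ℕ), (∀ X ∈ Z, X ∈ F) → #Z < 2 ^ aleph0 →
    ∃ Y ∈ F, IsPseudoIntersection Y Z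

/-!
Under `𝔭 = 𝔠` every family of `< 𝔠` infinite sets with the finite intersection property has a
pseudo-intersection. Two consequences drive the proof. First, `𝔠` is regular: for `μ < 𝔠`,
pseudo-intersections of the `2 ^ μ` patterns of an independent family of size `μ` are pairwise
distinct, so `2 ^ μ ≤ 𝔠 < 𝔠 ^ cof 𝔠 = 2 ^ cof 𝔠` (König) forces `cof 𝔠 = 𝔠`. Second, if `J` is
an infinite ideal independent family of size `< 𝔠`, `A ∈ J`, and `Y ⊆ A` is infinite and almost
disjoint from the other members, then some `B` with `A \ B = Y` can be added to `J`.

A recursion of length `𝔠` visits every set `X` and every pair `(A, X)` cofinally often. At a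
visit of `X` it adds `X` if that keeps the family ideal independent, which makes the final
family `I` maximal. At a visit of `(A, X)` it adds a `B` whose trace `A \ B` is infinite, almost
disjoint from all earlier members, and contained in `X` or in `Xᶜ`. So `𝓕(I, A)` decides every
`X`, and as any `< 𝔠` members of `I` appear before some stage, every small subfamily of
`𝓕(I, A)` has a pseudo-intersection `A \ B` in `𝓕(I, A)`.
-/

universe u

theorem Set.Infinite.diff_sUnion {α : Type*} {Y : Set α} (hY : Y.Infinite) {F : Finset (Set α)}
    (hF : ∀ C ∈ F, (Y ∩ C).Finite) : (Y \ ⋃₀ (F : Set (Set α))).Infinite := by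
  have hfin : (Y ∩ ⋃₀ (F : Set (Set α))).Finite := by
    rw [sUnion_eq_biUnion, inter_iUnion₂]
    exact F.finite_toSet.biUnion hF
  simpa using hY.sdiff hfin

section IdealIndependent

variable {I J : Set (Set ℕ)}

theorem IdealIndependent.mono (hJ : IdealIndependent J) (hIJ : I ⊆ J) : IdealIndependent I :=
  fun A hA F hF => hJ A (hIJ hA) F fun _ hC => ⟨hIJ (hF hC).1, (hF hC).2⟩

theorem idealIndependent_of_forall_finite (h : ∀ G ⊆ J, G.Finite → IdealIndependent G) :
    IdealIndependent J := by
  intro A hA F hF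
  have hG : insert A (F : Set (Set ℕ)) ⊆ J := insert_subset hA fun C hC => (hF hC).1
  exact h _ hG (F.finite_toSet.insert A) A (mem_insert _ _) F
    fun C hC => ⟨mem_insert_of_mem _ hC, (hF hC).2⟩

theorem IdealIndependent.infinite_compl_sUnion (hJ : IdealIndependent J) (hJinf : J.Infinite)
    (F : Finset (Set ℕ)) (hF : ↑F ⊆ J) : (⋃₀ (F : Set (Set ℕ)))ᶜ.Infinite := by
  obtain ⟨C, hCJ, hCF⟩ := (hJinf.sdiff F.finite_toSet).nonempty
  refine (hJ C hCJ F fun D hD => ⟨hF hD, ?_⟩).mono fun x hx => hx.2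
  rintro rfl
  exact hCF hD

theorem idealIndependent_insert {B : Set ℕ}
    (hB : ∀ F : Finset (Set ℕ), ↑F ⊆ J → (B \ ⋃₀ (F : Set (Set ℕ))).Infinite)
    (hJB : ∀ D ∈ J, ∀ F : Finset (Set ℕ), ↑F ⊆ J \ {D} →
      (D \ (B ∪ ⋃₀ (F : Set (Set ℕ)))).Infinite) :
    IdealIndependent (insert B J) := by
  classical
  rintro D hD F hF
  by_cases hDB : D = B
  · subst hDB
    exact hB F fun C hC => ((hF hC).1.resolve_left (hF hC).2)
  · have hD : D ∈ J := hD.resolve_left hDB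
    refine (hJB D hD (F.erase B) fun C hC => ?_).mono ?_
    · simp only [Finset.coe_erase, Set.mem_sdiff, Finset.mem_coe, mem_singleton_iff] at hC
      exact ⟨(hF hC.1).1.resolve_left hC.2, (hF hC.1).2⟩
    · rintro x ⟨hxD, hx⟩
      refine ⟨hxD, fun ⟨C, hCF, hxC⟩ => hx ?_⟩
      by_cases hCB : C = B
      · exact Or.inl (hCB ▸ hxC)
      · exact Or.inr ⟨C, by simp [hCB, hCF], hxC⟩

end IdealIndependent

section complFilter

variable {I : Set (Set ℕ)} {A : Set ℕ}

theorem mem_complFilter_iff {U : Set ℕ} :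
    U ∈ complFilter I A ↔
      ∃ F : Finset (Set ℕ), ↑F ⊆ I \ {A} ∧ A \ ⋃₀ (F : Set (Set ℕ)) ⊆ U := by
  classical
  refine ⟨fun hU => ?_, fun ⟨F, hF, hFU⟩ =>
    mem_of_superset (mem_generate_of_mem ⟨F, hF, rfl⟩) hFU⟩
  obtain ⟨t, hts, htfin, htU⟩ := mem_generate_iff.1 hU
  suffices ∃ F : Finset (Set ℕ), ↑F ⊆ I \ {A} ∧ A \ ⋃₀ (F : Set (Set ℕ)) ⊆ ⋂₀ t from
    this.imp fun F hF => ⟨hF.1, hF.2.trans htU⟩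
  clear htU
  induction t, htfin using Set.Finite.induction_on with
  | empty => exact ⟨∅, by simp, by simp⟩
  | @insert S t _ _ ih =>
    obtain ⟨F₁, hF₁, rfl⟩ := hts (mem_insert _ _)
    obtain ⟨F₂, hF₂, hF₂t⟩ := ih ((subset_insert _ _).trans hts)
    refine ⟨F₁ ∪ F₂, by simpa using ⟨hF₁, hF₂⟩, ?_⟩
    rw [sInter_insert, Finset.coe_union, sUnion_union, ← sdiff_sdiff]
    exact subset_inter sdiff_subset ((sdiff_subset_sdiff_left sdiff_subset).trans hF₂t)

theorem IdealIndependent.infinite_of_mem_complFilter (hI : IdealIndependent I) (hA : A ∈ I)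
    {U : Set ℕ} (hU : U ∈ complFilter I A) : U.Infinite := by
  obtain ⟨F, hF, hFU⟩ := mem_complFilter_iff.1 hU
  exact (hI A hA F hF).mono hFU

theorem diff_mem_complFilter {B : Set ℕ} (hB : B ∈ I \ {A}) : A \ B ∈ complFilter I A :=
  mem_complFilter_iff.2 ⟨{B}, by simpa using hB, by simp⟩

/-- Each member of a small `Z ⊆ 𝓕(I, A)` contains `A` minus finitely many members of `I`; taking
`B` for all of these at once, `A \ B ∈ 𝓕(I, A)` is a pseudo-intersection of `Z`. -/
theorem isPcPoint_complFilter (hI : IdealIndependent I) (hA : A ∈ I)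
    (hdecide : ∀ D : Set ℕ, D ∈ complFilter I A ∨ Dᶜ ∈ complFilter I A)
    (hthin : ∀ G ⊆ I \ {A}, #G < 𝔠 →
      ∃ B ∈ I \ {A}, (A \ B).Infinite ∧ ∀ C ∈ G, ((A \ B) ∩ C).Finite) :
    IsPcPoint (complFilter I A) := by
  have hinf := fun U => hI.infinite_of_mem_complFilter hA (U := U)
  refine ⟨fun hbot => ?_, fun U hU => ?_, hdecide, fun Z hZ hZcard => ?_⟩
  · exact (hinf ∅ (hbot ▸ mem_bot)).nonempty.ne_empty rfl
  · exact (hdecide U).resolve_right fun hUc => hinf _ hUc hU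
  choose! F hF hFX using fun X hX => mem_complFilter_iff.1 (hZ X hX)
  rw [two_power_aleph0] at hZcard
  have hGcard : #(⋃ X ∈ Z, (F X : Set (Set ℕ))) < 𝔠 := by
    refine (mk_biUnion_le _ _).trans_lt (mul_lt_of_lt aleph0_le_continuum hZcard ?_)
    exact (ciSup_le' fun X : Z => (F X).finite_toSet.countable.le_aleph0).trans_lt
      aleph0_lt_continuum
  obtain ⟨B, hB, hBinf, hBthin⟩ :=
    hthin _ (iUnion₂_subset fun X hX => hF X hX) hGcard
  refine ⟨A \ B, diff_mem_complFilter hB, hBinf, fun X hX => ?_⟩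
  have hfin : ((A \ B) ∩ ⋃₀ (F X : Set (Set ℕ))).Finite := by
    rw [sUnion_eq_biUnion, inter_iUnion₂]
    exact (F X).finite_toSet.biUnion fun C hC => hBthin C (mem_biUnion hX hC)
  exact hfin.subset fun x hx => ⟨hx.1, by_contra fun h => hx.2 (hFX X hX ⟨hx.1.1, h⟩)⟩

end complFilter

theorem exists_isPseudoIntersection_of_mk_lt_pNumber {Z : Set (Set ℕ)} (hinf : ∀ A ∈ Z, A.Infinite)
    (hZ : HasFIP Z) (hcard : #Z < pNumber) : ∃ Y, IsPseudoIntersection Y Z := by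
  by_contra h
  have : pNumber ≤ #Z := csInf_le' ⟨Z, hinf, hZ, h, rfl⟩
  exact this.not_gt hcard

section ContinuumEqP

variable {J K : Set (Set ℕ)} {A : Set ℕ}

theorem exists_infinite_subset_almostDisjoint (hp : pNumber = 𝔠) (hK : #K < 𝔠)
    (hAK : ∀ F : Finset (Set ℕ), ↑F ⊆ K → (A \ ⋃₀ (F : Set (Set ℕ))).Infinite) :
    ∃ Q ⊆ A, Q.Infinite ∧ ∀ C ∈ K, (Q ∩ C).Finite := by
  classical
  have hsub : ∀ F : Finset (Set ℕ),
      A \ ⋃₀ ((F.erase ∅ : Finset (Set ℕ)) : Set (Set ℕ)) ⊆ ⋂ C ∈ F, A \ C := by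
    rintro F x ⟨hxA, hx⟩
    refine mem_iInter₂.2 fun C hC => ⟨hxA, fun hxC => hx ⟨C, ?_, hxC⟩⟩
    exact Finset.mem_erase.2 ⟨fun h => by simp [h] at hxC, hC⟩
  have herase : ∀ F : Finset (Set ℕ), ↑F ⊆ insert ∅ K → ↑(F.erase ∅) ⊆ K := by
    intro F hF C hC
    simp only [Finset.coe_erase, Set.mem_sdiff, mem_singleton_iff] at hC
    exact (hF hC.1).resolve_left hC.2
  -- `A = A \ ∅` is thrown in so that the pseudo-intersection is almost contained in `A`.
  obtain ⟨P, hPinf, hP⟩ : ∃ P, IsPseudoIntersection P ((A \ ·) '' insert ∅ K) := by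
    refine exists_isPseudoIntersection_of_mk_lt_pNumber ?_ ?_ ?_
    · rintro _ ⟨C, hC, rfl⟩
      exact (hAK _ (herase {C} (by simpa using hC))).mono ((hsub {C}).trans (by simp))
    · intro F hF
      obtain ⟨F', hF', rfl⟩ := Finset.subset_set_image_iff.1 hF
      refine (hAK _ (herase F' hF')).mono ((hsub F').trans ?_)
      simp [sInter_image]
    · refine mk_image_le.trans_lt (mk_insert_le.trans_lt ?_)
      rw [hp]
      exact add_lt_of_lt aleph0_le_continuum hK (one_lt_aleph0.trans aleph0_lt_continuum)
  have hPA : (P \ A).Finite := by simpa using hP A ⟨∅, mem_insert _ _, sdiff_empty⟩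
  refine ⟨P ∩ A, inter_subset_right, fun h => hPinf ((h.union hPA).subset ?_), ?_⟩
  · intro x hx
    by_cases hxA : x ∈ A
    exacts [Or.inl ⟨hx, hxA⟩, Or.inr ⟨hx, hxA⟩]
  · intro C hC
    exact (hP _ ⟨C, mem_insert_of_mem _ hC, rfl⟩).subset
      fun x hx => ⟨hx.1.1, fun h => h.2 hx.2⟩

/-- The new member is `B = (A \ Y) ∪ E`, where `E` is an infinite set outside `A` almost
disjoint from all of `J`: `E` makes `B` independent of `J`, and since `B ⊆ A ∪ E` it costs
the other members only the finite sets `E ∩ D`. -/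
theorem exists_idealIndependent_insert_diff_eq (hp : pNumber = 𝔠) (hJ : IdealIndependent J)
    (hJinf : J.Infinite) (hJcard : #J < 𝔠) (hA : A ∈ J) {Y : Set ℕ} (hYA : Y ⊆ A)
    (hY : Y.Infinite) (hYJ : ∀ C ∈ J \ {A}, (Y ∩ C).Finite) :
    ∃ B, IdealIndependent (insert B J) ∧ A \ B = Y := by
  obtain ⟨P, -, hPinf, hPJ⟩ := exists_infinite_subset_almostDisjoint (A := univ) hp hJcard
    fun F hF => by simpa [compl_eq_univ_sdiff] using hJ.infinite_compl_sUnion hJinf F hF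
  set E := P \ A
  have hEinf : E.Infinite := by simpa [E, inter_comm] using hPinf.sdiff (hPJ A hA)
  have hEJ : ∀ C ∈ J, (E ∩ C).Finite := fun C hC =>
    (hPJ C hC).subset (inter_subset_inter_left _ sdiff_subset)
  refine ⟨(A \ Y) ∪ E, idealIndependent_insert (fun F hF => ?_) fun D hD F hF => ?_, ?_⟩
  · exact (hEinf.diff_sUnion fun C hC => hEJ C (hF hC)).mono
      (sdiff_subset_sdiff_left subset_union_right)
  · by_cases hDA : D = A
    · subst hDA
      refine (hY.diff_sUnion fun C hC => hYJ C (hF hC)).mono ?_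
      rintro x ⟨hxY, hxF⟩
      refine ⟨hYA hxY, ?_⟩
      rintro ((⟨-, h⟩ | ⟨-, h⟩) | h)
      exacts [h hxY, h (hYA hxY), hxF h]
    · have hAF : ↑(insert A F) ⊆ J \ {D} := by
        simpa [insert_subset_iff, hA, Ne.symm hDA] using hF
      refine ((hJ D hD _ hAF).sdiff (hEJ D hD)).mono ?_
      rintro x ⟨⟨hxD, hxAF⟩, hxE⟩
      simp only [Finset.coe_insert, sUnion_insert, mem_union, not_or] at hxAF
      exact ⟨hxD, by
        rintro ((⟨hxA, -⟩ | hxE') | hxF)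
        exacts [hxAF.1 hxA, hxE ⟨hxE', hxD⟩, hxAF.2 hxF]⟩
  · ext x
    refine ⟨fun ⟨hxA, hx⟩ => by_contra fun hxY => hx (Or.inl ⟨hxA, hxY⟩), fun hxY => ?_⟩
    exact ⟨hYA hxY, by rintro (⟨-, h⟩ | ⟨-, h⟩); exacts [h hxY, h (hYA hxY)]⟩

theorem exists_idealIndependent_insert_decide (hp : pNumber = 𝔠) (hJ : IdealIndependent J)
    (hJinf : J.Infinite) (hJcard : #J < 𝔠) (hA : A ∈ J) (X : Set ℕ) :
    ∃ B, IdealIndependent (insert B J) ∧ (A \ B).Infinite ∧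
      (∀ C ∈ J \ {A}, ((A \ B) ∩ C).Finite) ∧ (A \ B ⊆ X ∨ A \ B ⊆ Xᶜ) := by
  obtain ⟨Q, hQA, hQinf, hQJ⟩ := exists_infinite_subset_almostDisjoint hp
    ((mk_le_mk_of_subset sdiff_subset).trans_lt hJcard) (hJ A hA)
  have carve : ∀ Y ⊆ Q, Y.Infinite → ∃ B, IdealIndependent (insert B J) ∧ (A \ B).Infinite ∧
      (∀ C ∈ J \ {A}, ((A \ B) ∩ C).Finite) ∧ A \ B = Y := by
    intro Y hYQ hY
    obtain ⟨B, hB, hAB⟩ := exists_idealIndependent_insert_diff_eq hp hJ hJinf hJcard hA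
      (hYQ.trans hQA) hY fun C hC => (hQJ C hC).subset (inter_subset_inter_left _ hYQ)
    exact ⟨B, hB, hAB ▸ hY, fun C hC => hAB ▸ (hQJ C hC).subset
      (inter_subset_inter_left _ (hAB ▸ hYQ)), hAB⟩
  rcases infinite_union.1 (by rwa [inter_union_sdiff] : (Q ∩ X ∪ Q \ X).Infinite) with h | h
  · obtain ⟨B, hB, hinf, hthin, hAB⟩ := carve _ inter_subset_left h
    exact ⟨B, hB, hinf, hthin, Or.inl (hAB ▸ inter_subset_right)⟩
  · obtain ⟨B, hB, hinf, hthin, hAB⟩ := carve _ sdiff_subset h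
    exact ⟨B, hB, hinf, hthin, Or.inr (hAB ▸ fun x hx => hx.2)⟩

end ContinuumEqP

open Classical in
noncomputable def truncation (X : Set ℕ) (m : ℕ) : Finset ℕ := {k ∈ Finset.range m | k ∈ X}

theorem eventually_injOn_truncation (s : Finset (Set ℕ)) :
    ∀ᶠ m in atTop, InjOn (truncation · m) s := by
  simp only [InjOn, Finset.mem_coe, eventually_all_finset]
  intro X _ Y _
  by_cases hXY : X = Y
  · exact Eventually.of_forall fun _ _ => hXY
  obtain ⟨k, hk⟩ : ∃ k, ¬(k ∈ X ↔ k ∈ Y) := by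
    by_contra! h
    exact hXY (Set.ext h)
  filter_upwards [eventually_gt_atTop k] with m hm heq
  exact absurd (by simpa [truncation, hm] using congrArg (k ∈ ·) heq) hk

/-- The classical independent family of size `𝔠`: `n` codes a pair `(m, 𝒜)`, and lies in
`indepFamily X` iff the trace of `X` on `[0, m)` belongs to `𝒜`. -/
noncomputable def indepFamily (X : Set ℕ) : Set ℕ :=
  Denumerable.ofNat (ℕ × Finset (Finset ℕ)) ⁻¹' {p | truncation X p.1 ∈ p.2}

theorem infinite_setOf_forall_mem_indepFamily_iff (s : Finset (Set ℕ)) (f : Set ℕ → Prop) :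
    {n | ∀ X ∈ s, n ∈ indepFamily X ↔ f X}.Infinite := by
  classical
  obtain ⟨N, hN⟩ := eventually_atTop.1 (eventually_injOn_truncation s)
  let code (k : ℕ) : ℕ × Finset (Finset ℕ) :=
    (N + k, (s.filter f).image (truncation · (N + k)))
  have hcode : ∀ k, ∀ X ∈ s, truncation X (code k).1 ∈ (code k).2 ↔ f X := by
    intro k X hX
    simp only [code, Finset.mem_image, Finset.mem_filter]
    exact ⟨fun ⟨Y, ⟨hY, hfY⟩, hYX⟩ => hN _ (Nat.le_add_right N k) hY hX hYX ▸ hfY,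
      fun hfX => ⟨X, ⟨hX, hfX⟩, rfl⟩⟩
  change (Denumerable.ofNat _ ⁻¹'
    {p : ℕ × Finset (Finset ℕ) | ∀ X ∈ s, truncation X p.1 ∈ p.2 ↔ f X}).Infinite
  refine Set.Infinite.preimage ?_ fun p _ =>
    (Denumerable.eqv (ℕ × Finset (Finset ℕ))).symm.surjective p
  refine Set.infinite_of_injective_forall_mem (f := code) (fun k l hkl => ?_) hcode
  simpa [code] using congrArg Prod.fst hkl

theorem two_pow_le_continuum (hp : pNumber = 𝔠) {μ : Cardinal.{0}} (hμ : μ < 𝔠) :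
    2 ^ μ ≤ 𝔠 := by
  obtain ⟨S, -, rfl⟩ :=
    le_mk_iff_exists_subset.1 (by simpa using hμ.le : μ ≤ #(univ : Set (Set ℕ)))
  let pattern (T : Set (Set ℕ)) (X : Set ℕ) : Set ℕ := {n | n ∈ indepFamily X ↔ X ∈ T}
  have hpseudo : ∀ T, ∃ Y, IsPseudoIntersection Y (pattern T '' S) := by
    intro T
    refine exists_isPseudoIntersection_of_mk_lt_pNumber ?_ ?_ (hp ▸ mk_image_le.trans_lt hμ)
    · rintro _ ⟨X, -, rfl⟩
      simpa using infinite_setOf_forall_mem_indepFamily_iff {X} (· ∈ T)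
    · intro F hF
      classical
      obtain ⟨F', -, rfl⟩ := Finset.subset_set_image_iff.1 hF
      refine (infinite_setOf_forall_mem_indepFamily_iff F' (· ∈ T)).mono ?_
      simp only [Finset.coe_image, sInter_image]
      exact fun n hn => mem_iInter₂.2 fun X hX => hn X hX
  choose Y hY using hpseudo
  have hYinj : InjOn Y (𝒫 S) := by
    intro T hT T' hT' hTT'
    by_contra hne
    obtain ⟨X, hXS, hXT⟩ : ∃ X ∈ S, ¬(X ∈ T ↔ X ∈ T') := by
      by_contra! h
      exact hne (Set.ext fun X =>
        ⟨fun hX => (h X (hT hX)).1 hX, fun hX => (h X (hT' hX)).2 hX⟩)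
    refine (hY T).1 (((hY T).2 _ ⟨X, hXS, rfl⟩).union (hTT' ▸ (hY T').2 _ ⟨X, hXS, rfl⟩)
      |>.subset fun n hn => ?_)
    by_cases h : n ∈ indepFamily X ↔ X ∈ T
    · exact Or.inr ⟨hn, fun h' => hXT (h.symm.trans h')⟩
    · exact Or.inl ⟨hn, h⟩
  calc 2 ^ #S = #(𝒫 S) := (mk_powerset S).symm
    _ = #(Y '' 𝒫 S) := (mk_image_eq_of_injOn _ _ hYinj).symm
    _ ≤ 𝔠 := mk_set_nat ▸ mk_set_le _

theorem isRegular_continuum (hp : pNumber = 𝔠) : Cardinal.IsRegular (𝔠 : Cardinal.{0}) := by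
  refine ⟨aleph0_le_continuum, not_lt.1 fun hcof => ?_⟩
  have hcof_inf : ℵ₀ ≤ (𝔠).ord.cof :=
    (isRegular_cof (isSuccLimit_ord aleph0_le_continuum)).aleph0_le
  have hpow : 𝔠 ^ (𝔠).ord.cof = 2 ^ (𝔠).ord.cof := by
    nth_rewrite 1 [← two_power_aleph0]
    rw [← power_mul, aleph0_mul_eq hcof_inf]
  exact (lt_power_cof_ord aleph0_le_continuum).not_ge (hpow ▸ two_pow_le_continuum hp hcof)

theorem exists_unbounded_enumeration {T W : Type u} [LinearOrder W] (hTW : #(T × W) = #W)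
    (hW : ∀ α : W, #(Iic α) < #W) : ∃ f : W → T, ∀ t α₀, ∃ α, α₀ < α ∧ f α = t := by
  obtain ⟨e⟩ := Cardinal.eq.1 hTW
  refine ⟨fun α => (e.symm α).1, fun t α₀ => ?_⟩
  by_contra! h
  have hle : ∀ w, e (t, w) ≤ α₀ := fun w =>
    not_lt.1 fun hlt => h _ hlt (by simp)
  refine (hW α₀).not_ge (mk_le_of_injective (f := fun w => (⟨e (t, w), hle w⟩ : Iic α₀)) ?_)
  intro w w' hww'
  simpa using e.injective (Subtype.ext_iff.1 hww')

/-- Starting from an infinite family keeps every stage infinite, so that no finite subfamily of a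
stage covers a cofinite set. -/
def columns : Set (Set ℕ) := range fun k => range (Nat.pair k)

theorem idealIndependent_columns : IdealIndependent columns := by
  rintro _ ⟨k, rfl⟩ F hF
  refine (infinite_range_of_injective (f := Nat.pair k)
    fun m m' h => (Nat.pair_eq_pair.1 h).2).mono ?_
  rintro _ ⟨m, rfl⟩
  refine ⟨⟨m, rfl⟩, fun ⟨C, hCF, hC⟩ => ?_⟩
  obtain ⟨⟨k', rfl⟩, hne⟩ := hF hCF
  obtain ⟨m', hm'⟩ := hC
  exact hne (by simp [(Nat.pair_eq_pair.1 hm').1])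

theorem columns_infinite : columns.Infinite := by
  refine infinite_range_of_injective fun k k' h => ?_
  obtain ⟨m, hm⟩ : Nat.pair k 0 ∈ range (Nat.pair k') := h ▸ ⟨0, rfl⟩
  exact (Nat.pair_eq_pair.1 hm).1.symm

/-- `inl X` asks to add `X` to the family if that keeps it ideal independent; `inr (A, X)` asks
to decide `X` in `𝓕(·, A)` by a new member whose trace on `A` is almost disjoint from all
earlier members. -/
abbrev Requirement : Type := Set ℕ ⊕ Set ℕ × Set ℕ

def Meets : Requirement → Set (Set ℕ) → Set ℕ → Prop
  | .inl X, J, B => B = X ∨ ¬IdealIndependent (insert X J)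
  | .inr (A, X), J, B => A ∈ J → (A \ B).Infinite ∧ (∀ C ∈ J \ {A}, ((A \ B) ∩ C).Finite) ∧
      (A \ B ⊆ X ∨ A \ B ⊆ Xᶜ)

section Step

variable {J : Set (Set ℕ)}

theorem exists_meets (hp : pNumber = 𝔠) (hJ : IdealIndependent J) (hJinf : J.Infinite)
    (hJcard : #J < 𝔠) : ∀ t : Requirement, ∃ B, IdealIndependent (insert B J) ∧ Meets t J B
  | .inl X => by
    by_cases hX : IdealIndependent (insert X J)
    · exact ⟨X, hX, Or.inl rfl⟩
    · obtain ⟨B, hB⟩ := hJinf.nonempty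
      exact ⟨B, by rwa [insert_eq_of_mem hB], Or.inr hX⟩
  | .inr (A, X) => by
    by_cases hA : A ∈ J
    · obtain ⟨B, hB, h⟩ := exists_idealIndependent_insert_decide hp hJ hJinf hJcard hA X
      exact ⟨B, hB, fun _ => h⟩
    · obtain ⟨B, hB⟩ := hJinf.nonempty
      exact ⟨B, by rwa [insert_eq_of_mem hB], fun h => absurd h hA⟩

noncomputable def step (t : Requirement) (J : Set (Set ℕ)) : Set ℕ :=
  Classical.epsilon fun B => IdealIndependent (insert B J) ∧ Meets t J B

theorem step_spec (hp : pNumber = 𝔠) (hJ : IdealIndependent J) (hJinf : J.Infinite)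
    (hJcard : #J < 𝔠) (t : Requirement) :
    IdealIndependent (insert (step t J) J) ∧ Meets t J (step t J) :=
  Classical.epsilon_spec (exists_meets hp hJ hJinf hJcard t)

end Step

abbrev Stage : Type := (𝔠 : Cardinal.{0}).ord.ToType

theorem mk_Iic_stage_lt (α : Stage) : #(Iic α) < 𝔠 := by
  have hIio : #(Iio α) < 𝔠 := by
    simpa using mk_Iio_lt α (by rw [mk_ord_toType, Ordinal.type_toType])
  rw [← Iio_insert]
  exact mk_insert_le.trans_lt
    (add_lt_of_lt aleph0_le_continuum hIio (one_lt_aleph0.trans aleph0_lt_continuum))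

instance : Nonempty Stage :=
  mk_ne_zero_iff.1 (by rw [mk_ord_toType]; exact continuum_ne_zero)

theorem exists_schedule :
    ∃ schedule : Stage → Requirement, ∀ r α₀, ∃ α, α₀ < α ∧ schedule α = r := by
  refine exists_unbounded_enumeration ?_ fun α => by rw [mk_ord_toType]; exact mk_Iic_stage_lt α
  simp

noncomputable def schedule : Stage → Requirement := exists_schedule.choose

theorem schedule_unbounded (r : Requirement) (α₀ : Stage) : ∃ α, α₀ < α ∧ schedule α = r :=
  exists_schedule.choose_spec r α₀

noncomputable def member : Stage → Set ℕ :=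
  WellFoundedLT.fix fun α previous =>
    step (schedule α) (columns ∪ range fun β : Iio α => previous β β.2)

def familyOn (S : Set Stage) : Set (Set ℕ) := columns ∪ member '' S

theorem member_eq (α : Stage) : member α = step (schedule α) (familyOn (Iio α)) := by
  rw [member, WellFoundedLT.fix_eq, familyOn, image_eq_range]
  rfl

theorem familyOn_mono {S T : Set Stage} (h : S ⊆ T) : familyOn S ⊆ familyOn T :=
  union_subset_union_right _ (image_mono h)

theorem familyOn_Iic (α : Stage) :
    familyOn (Iic α) = insert (member α) (familyOn (Iio α)) := by
  rw [familyOn, familyOn, ← Iio_insert, image_insert_eq, union_insert]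

theorem familyOn_infinite (S : Set Stage) : (familyOn S).Infinite :=
  columns_infinite.mono subset_union_left

theorem mk_familyOn_Iio_lt (α : Stage) : #(familyOn (Iio α)) < 𝔠 := by
  refine (mk_union_le _ _).trans_lt (add_lt_of_lt aleph0_le_continuum ?_ ?_)
  · exact (countable_range _).le_aleph0.trans_lt aleph0_lt_continuum
  · exact mk_image_le.trans_lt ((mk_le_mk_of_subset Iio_subset_Iic_self).trans_lt
      (mk_Iic_stage_lt α))

theorem subset_columns_or_exists_subset_familyOn_Iic {S : Set Stage} {G : Set (Set ℕ)}
    (hG : G ⊆ familyOn S) (hGfin : G.Finite) :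
    G ⊆ columns ∨ ∃ β ∈ S, G ⊆ familyOn (Iic β) := by
  refine or_iff_not_imp_left.2 fun hcol => ?_
  have hborn : ∀ C ∈ G \ columns, ∃ β ∈ S, member β = C := fun C hC =>
    (hG hC.1).resolve_left hC.2
  choose! birth hbirthS hbirth using hborn
  obtain ⟨C₀, hC₀, hmax⟩ :=
    exists_max_image _ birth (hGfin.subset sdiff_subset) (sdiff_nonempty.2 hcol)
  refine ⟨birth C₀, hbirthS C₀ hC₀, fun C hC => ?_⟩
  by_cases hCcol : C ∈ columns
  exacts [Or.inl hCcol, Or.inr ⟨birth C, hmax C ⟨hC, hCcol⟩, hbirth C ⟨hC, hCcol⟩⟩]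

theorem idealIndependent_familyOn_of_Iic {S : Set Stage}
    (h : ∀ β ∈ S, IdealIndependent (familyOn (Iic β))) : IdealIndependent (familyOn S) := by
  refine idealIndependent_of_forall_finite fun G hG hGfin => ?_
  obtain hcol | ⟨β, hβ, hGβ⟩ := subset_columns_or_exists_subset_familyOn_Iic hG hGfin
  exacts [idealIndependent_columns.mono hcol, (h β hβ).mono hGβ]

theorem idealIndependent_familyOn_Iic (hp : pNumber = 𝔠) (α : Stage) :
    IdealIndependent (familyOn (Iic α)) := by
  induction α using WellFoundedLT.induction with
  | ind α ih =>
    have hbelow := idealIndependent_familyOn_of_Iic fun β hβ => ih β hβ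
    rw [familyOn_Iic, member_eq]
    exact (step_spec hp hbelow (familyOn_infinite _) (mk_familyOn_Iio_lt α) _).1

theorem idealIndependent_familyOn (hp : pNumber = 𝔠) (S : Set Stage) :
    IdealIndependent (familyOn S) :=
  idealIndependent_familyOn_of_Iic fun β _ => idealIndependent_familyOn_Iic hp β

theorem meets_member (hp : pNumber = 𝔠) (α : Stage) :
    Meets (schedule α) (familyOn (Iio α)) (member α) :=
  member_eq α ▸ (step_spec hp (idealIndependent_familyOn hp _) (familyOn_infinite _)
    (mk_familyOn_Iio_lt α) _).2

/-- `𝔠` is regular, so the stages at which the members of `G` appear are bounded. -/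
theorem exists_subset_familyOn_Iio (hp : pNumber = 𝔠) {G : Set (Set ℕ)}
    (hG : G ⊆ familyOn univ) (hGcard : #G < 𝔠) : ∃ α, G ⊆ familyOn (Iio α) := by
  have hborn : ∀ C ∈ G \ columns, ∃ β, member β = C := fun C hC => by
    simpa using (hG hC.1).resolve_left hC.2
  choose! birth hbirth using hborn
  have hcof : Order.cof Stage = 𝔠 := by
    rw [Ordinal.cof_toType, (isRegular_continuum hp).cof_ord]
  obtain ⟨α, hα⟩ := not_isCofinal_iff.1 fun hbirths => (hcof ▸ Order.cof_le hbirths).not_gt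
    (mk_image_le.trans_lt ((mk_le_mk_of_subset sdiff_subset).trans_lt hGcard))
  refine ⟨α, fun C hC => ?_⟩
  by_cases hCcol : C ∈ columns
  exacts [Or.inl hCcol,
    Or.inr ⟨birth C, hα _ (mem_image_of_mem _ ⟨hC, hCcol⟩), hbirth C ⟨hC, hCcol⟩⟩]

theorem exists_member_decide (hp : pNumber = 𝔠) {A : Set ℕ} (hA : A ∈ familyOn univ)
    {G : Set (Set ℕ)} (hG : G ⊆ familyOn univ) (hGcard : #G < 𝔠) (X : Set ℕ) :
    ∃ B ∈ familyOn univ \ {A}, (A \ B).Infinite ∧ (∀ C ∈ G \ {A}, ((A \ B) ∩ C).Finite) ∧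
      (A \ B ⊆ X ∨ A \ B ⊆ Xᶜ) := by
  obtain ⟨α₀, hα₀⟩ := exists_subset_familyOn_Iio hp (insert_subset hA hG)
    (mk_insert_le.trans_lt
      (add_lt_of_lt aleph0_le_continuum hGcard (one_lt_aleph0.trans aleph0_lt_continuum)))
  obtain ⟨α, hα, hsched⟩ := schedule_unbounded (.inr (A, X)) α₀
  have hsub : familyOn (Iio α₀) ⊆ familyOn (Iio α) := familyOn_mono (Iio_subset_Iio hα.le)
  have hmeets := meets_member hp α
  rw [hsched] at hmeets
  obtain ⟨hinf, hthin, hdecide⟩ := hmeets (hsub (hα₀ (mem_insert _ _)))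
  refine ⟨member α, ⟨Or.inr ⟨α, mem_univ _, rfl⟩, fun h => ?_⟩, hinf,
    fun C hC => hthin C ⟨hsub (hα₀ (mem_insert_of_mem _ hC.1)), hC.2⟩, hdecide⟩
  rw [mem_singleton_iff.1 h, sdiff_self] at hinf
  exact hinf finite_empty

theorem mem_familyOn_or_not_idealIndependent_insert (hp : pNumber = 𝔠) (X : Set ℕ) :
    X ∈ familyOn univ ∨ ∃ J ⊆ familyOn univ, ¬IdealIndependent (insert X J) := by
  obtain ⟨α, -, hsched⟩ := schedule_unbounded (.inl X) Classical.ofNonempty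
  have hmeets := meets_member hp α
  rw [hsched] at hmeets
  exact hmeets.imp (fun h => Or.inr ⟨α, mem_univ _, h⟩)
    fun h => ⟨_, familyOn_mono (subset_univ _), h⟩

/-- If 𝔭 = 2^ℵ₀ then there is a maximal ideal independent family all of whose
complemented filters are `p_𝔠`-points. -/
theorem exists_maxIdealIndependent_pc_points (hp : pNumber = 2 ^ aleph0) :
    ∃ I : Set (Set ℕ), MaxIdealIndependent I ∧
      ∀ A ∈ I, IsPcPoint (complFilter I A) := by
  rw [two_power_aleph0] at hp
  have hI := idealIndependent_familyOn hp univ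
  refine ⟨familyOn univ, ⟨hI, fun J hJ hsub => subset_antisymm (fun X hX => ?_) hsub⟩,
    fun A hA => isPcPoint_complFilter hI hA (fun D => ?_) fun G hG hGcard => ?_⟩
  · obtain hX | ⟨K, hK, hKX⟩ := mem_familyOn_or_not_idealIndependent_insert hp X
    exacts [hX, absurd (hJ.mono (insert_subset hX (hK.trans hsub))) hKX]
  · obtain ⟨B, hB, -, -, hD⟩ :=
      exists_member_decide hp hA (empty_subset _) (by simp [continuum_pos]) D
    exact hD.imp (mem_of_superset (diff_mem_complFilter hB))
      (mem_of_superset (diff_mem_complFilter hB))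
  · obtain ⟨B, hB, hinf, hthin, -⟩ :=
      exists_member_decide hp hA (hG.trans sdiff_subset) hGcard ∅
    exact ⟨B, hB, hinf, fun C hC => hthin C ⟨hC, (hG hC).2⟩⟩
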